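/- Equivalence of history-dependent and node-dependent worst-case values, finite horizon (Theorem 6.1, finite-horizon part): define recursively Ṽ : ℕ → S → N → ℝ by Ṽ 0 s n = 0 and Ṽ (d+1) s n = R s (α n) + γ · sInf {∑_{s'} T s (α n) s' · ∑_o Z̃ s' o · Ṽ d s' (T_FSC n o) | Z̃ ∈ D n}, and V̂ : ℕ → S → List O → ℝ by V̂ 0 s h = 0 and V̂ (d+1) s h = R s (α (n_h h)) + γ · sInf {∑_{s'} T s (α (n_h h)) s' · ∑_o Ẑ s' o · V̂ d s' (h ++ [o]) | Ẑ ∈ D (n_h h)}. Then for every horizon d ∈ ℕ, every state s ∈ S, and every history h : List O, one has V̂ d s h = Ṽ d s (n_h h). -/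
import Mathlib


/-- The node map sending a history `h : List O` to the controller node reached by
following the memory update `T_FSC` from the initial node `n₀`. -/
def nodeOfHistory {N O : Type*} (TFSC : N → O → N) (n₀ : N) (h : List O) : N :=
  List.foldl TFSC n₀ h

/-- The node-dependent worst-case `d`-step value `Ṽ d s n`. -/
noncomputable def Vnode {S N O A : Type*} [Fintype S] [Fintype O]
    (α : N → A) (TFSC : N → O → N) (T : S → A → S → ℝ) (R : S → A → ℝ) (γ : ℝ)
    (D : N → Set (S → O → ℝ)) : ℕ → S → N → ℝ
  | 0 => fun _ _ => 0
  | d + 1 => fun s n =>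
      R s (α n) + γ * sInf
        ((fun Z => ∑ s', T s (α n) s' *
            ∑ o, Z s' o * Vnode α TFSC T R γ D d s' (TFSC n o)) '' D n)

/-- The history-dependent worst-case `d`-step value `V̂ d s h`, where the adversary may
pick a different deviated observation function at each history (non-sticky). -/
noncomputable def Vhist {S N O A : Type*} [Fintype S] [Fintype O]
    (α : N → A) (TFSC : N → O → N) (n₀ : N) (T : S → A → S → ℝ) (R : S → A → ℝ)
    (γ : ℝ) (D : N → Set (S → O → ℝ)) : ℕ → S → List O → ℝ
  | 0 => fun _ _ => 0
  | d + 1 => fun s h =>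
      R s (α (nodeOfHistory TFSC n₀ h)) + γ * sInf
        ((fun Z => ∑ s', T s (α (nodeOfHistory TFSC n₀ h)) s' *
            ∑ o, Z s' o * Vhist α TFSC n₀ T R γ D d s' (h ++ [o]))
          '' D (nodeOfHistory TFSC n₀ h))

/-- Equivalence of history-dependent and node-dependent worst-case values, finite horizon
(Theorem 6.1, finite-horizon part): for every horizon `d`, state `s`, and history `h`,
`V̂ d s h = Ṽ d s (n_h h)`. -/
theorem hist_eq_node_finite_horizon {S N O A : Type*}
    [Fintype S] [Fintype N] [Fintype O] [Fintype A]
    (α : N → A) (TFSC : N → O → N) (n₀ : N) (T : S → A → S → ℝ)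
    (hTnonneg : ∀ s a s', T s a s' ≥ 0) (hTsum : ∀ s a, ∑ s', T s a s' = 1)
    (R : S → A → ℝ) (γ : ℝ) (hγ0 : 0 ≤ γ) (hγ1 : γ ≤ 1)
    (D : N → Set (S → O → ℝ)) (hDne : ∀ n, (D n).Nonempty)
    (hDprob : ∀ n, ∀ Z ∈ D n, (∀ s' o, Z s' o ≥ 0) ∧ ∀ s', ∑ o, Z s' o = 1) :
    ∀ (d : ℕ) (s : S) (h : List O),
      Vhist α TFSC n₀ T R γ D d s h =
        Vnode α TFSC T R γ D d s (nodeOfHistory TFSC n₀ h) := by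
  intro d
  induction d with
  | zero => intro s h; simp [Vhist, Vnode]
  | succ d ih =>
      intro s h
      simp only [Vhist, Vnode]
      congr 2
      congr 1
      apply Set.image_congr
      intro Z _
      refine Finset.sum_congr rfl fun s' _ => ?_
      congr 1
      refine Finset.sum_congr rfl fun o _ => ?_
      rw [ih s' (h ++ [o])]
      congr 1
      simp [nodeOfHistory, List.foldl_append]
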